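/- arXiv:2006.03815 — 2 statements merged into one kernel-verified Lean document; each statement's English description precedes it below -/
import Mathlib

section
/- Let H_0 ∈ (1/2,1), m ≥ 1 an integer with (2H_0-2)m > -1, t > 0, and fix real numbers w₁,…,wₙ with nonnegative integers β_1,…,β_n summing appropriately so that Σ_k β_k = m. Then ∫_{[0,t]²} Π_{k=1}^n |s - s' - w_k/T|^{(2H_0-2)β_k} ds ds' → ∫_{[0,t]²} |s - s'|^{(2H_0-2)m} ds ds' as T → ∞. -/
/-!
Write `p = (2H₀ - 2)m > -1`. The kernel `|x|^p` is locally integrable, so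
`a ↦ ∫_{[u,v]} |a - x|^p dx` is continuous. By weighted AM-GM with weights `βₖ/m`,
`∏ₖ |d - cₖ|^((2H₀-2)βₖ) ≤ ∑ₖ (βₖ/m) |d - cₖ|^p`, and by that continuity the integrals of these
dominating functions converge, as `c → 0`, to the integral of the pointwise limit `|d|^p` itself.
The integrands converge off the diagonal `d = 0`, so Fatou's lemma from below and the moving
dominating functions from above squeeze the integrals; this is done once in `s'` and once in `s`.
-/

open MeasureTheory Filter Topology Set

theorem tendsto_integral_of_tendsto_of_le_of_tendsto_integral
    {α ι : Type*} [MeasurableSpace α] {μ : Measure α} {l : Filter ι} [l.IsCountablyGenerated]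
    {F G : ι → α → ℝ} {f : α → ℝ}
    (hF_meas : ∀ i, AEStronglyMeasurable (F i) μ) (hF_nonneg : ∀ i x, 0 ≤ F i x)
    (hFG : ∀ i, F i ≤ᵐ[μ] G i) (hG : ∀ i, Integrable (G i) μ) (hf : Integrable f μ)
    (h_lim : ∀ᵐ x ∂μ, Tendsto (fun i => F i x) l (𝓝 (f x)))
    (h_lim_int : Tendsto (fun i => ∫ x, G i x ∂μ) l (𝓝 (∫ x, f x ∂μ))) :
    Tendsto (fun i => ∫ x, F i x ∂μ) l (𝓝 (∫ x, f x ∂μ)) := by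
  rcases l.eq_or_neBot with rfl | hl
  · exact tendsto_bot
  have hF : ∀ i, Integrable (F i) μ := fun i =>
    (hG i).mono' (hF_meas i) <| (hFG i).mono fun x hx => by
      rwa [Real.norm_eq_abs, abs_of_nonneg (hF_nonneg i x)]
  have hf_nonneg : 0 ≤ᵐ[μ] f := h_lim.mono fun x hx => ge_of_tendsto' hx fun i => hF_nonneg i x
  have lower : ENNReal.ofReal (∫ x, f x ∂μ) ≤ liminf (fun i => ENNReal.ofReal (∫ x, F i x ∂μ)) l :=
    calc ENNReal.ofReal (∫ x, f x ∂μ) = ∫⁻ x, ENNReal.ofReal (f x) ∂μ :=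
          ofReal_integral_eq_lintegral_ofReal hf hf_nonneg
      _ = ∫⁻ x, liminf (fun i => ENNReal.ofReal (F i x)) l ∂μ :=
          lintegral_congr_ae <| h_lim.mono fun x hx => (ENNReal.tendsto_ofReal hx).liminf_eq.symm
      _ ≤ liminf (fun i => ∫⁻ x, ENNReal.ofReal (F i x) ∂μ) l :=
          lintegral_liminf_le' fun i => (hF_meas i).aemeasurable.ennreal_ofReal
      _ = liminf (fun i => ENNReal.ofReal (∫ x, F i x ∂μ)) l := by
          simp_rw [ofReal_integral_eq_lintegral_ofReal (hF _) (Eventually.of_forall (hF_nonneg _))]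
  have upper : limsup (fun i => ENNReal.ofReal (∫ x, F i x ∂μ)) l ≤ ENNReal.ofReal (∫ x, f x ∂μ) :=
    calc limsup (fun i => ENNReal.ofReal (∫ x, F i x ∂μ)) l
        ≤ limsup (fun i => ENNReal.ofReal (∫ x, G i x ∂μ)) l :=
          limsup_le_limsup <| Eventually.of_forall fun i =>
            ENNReal.ofReal_le_ofReal (integral_mono_ae (hF i) (hG i) (hFG i))
      _ = ENNReal.ofReal (∫ x, f x ∂μ) := (ENNReal.tendsto_ofReal h_lim_int).limsup_eq
  have hlim := (ENNReal.tendsto_toReal ENNReal.ofReal_ne_top).comp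
    (tendsto_of_le_liminf_of_limsup_le lower upper)
  rw [ENNReal.toReal_ofReal (integral_nonneg_of_ae hf_nonneg)] at hlim
  exact hlim.congr fun i => ENNReal.toReal_ofReal (integral_nonneg (hF_nonneg i))

theorem Real.prod_rpow_mul_le_sum_mul_rpow {ι : Type*} (s : Finset ι) {β x : ι → ℝ}
    (hβ : ∀ i ∈ s, 0 ≤ β i) (hx : ∀ i ∈ s, 0 ≤ x i) {B : ℝ} (hB : ∑ i ∈ s, β i = B)
    (hB0 : 0 < B) (q : ℝ) :
    ∏ i ∈ s, x i ^ (q * β i) ≤ ∑ i ∈ s, β i / B * x i ^ (q * B) := by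
  calc ∏ i ∈ s, x i ^ (q * β i) = ∏ i ∈ s, (x i ^ (q * B)) ^ (β i / B) :=
        Finset.prod_congr rfl fun i hi => by
          rw [← Real.rpow_mul (hx i hi), mul_assoc, mul_div_cancel₀ _ hB0.ne']
    _ ≤ ∑ i ∈ s, β i / B * x i ^ (q * B) :=
        Real.geom_mean_le_arith_mean_weighted s _ _ (fun i hi => div_nonneg (hβ i hi) hB0.le)
          (by rw [← Finset.sum_div, hB, div_self hB0.ne'])
          (fun i hi => Real.rpow_nonneg (hx i hi) _)

theorem intervalIntegrable_abs_rpow {p : ℝ} (hp : -1 < p) (a b : ℝ) :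
    IntervalIntegrable (fun x => |x| ^ p) volume a b := by
  have of_nonneg : ∀ c, 0 ≤ c → IntervalIntegrable (fun x => |x| ^ p) volume 0 c := fun c hc =>
    (intervalIntegral.intervalIntegrable_rpow' hp).congr fun x hx => by
      rw [uIoc_of_le hc] at hx
      simp [abs_of_pos hx.1]
  have from_zero : ∀ c, IntervalIntegrable (fun x => |x| ^ p) volume 0 c := fun c => by
    rcases le_total 0 c with hc | hc
    · exact of_nonneg c hc
    · simpa using (IntervalIntegrable.iff_comp_neg).mp (of_nonneg (-c) (neg_nonneg.2 hc))
  exact (from_zero a).symm.trans (from_zero b)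

theorem continuous_integral_Icc_comp_sub {f : ℝ → ℝ} (hf : ∀ a b, IntervalIntegrable f volume a b)
    (u v : ℝ) : Continuous fun a => ∫ x in Icc u v, f (x - a) := by
  rcases lt_or_ge v u with hvu | huv
  · simp [Icc_eq_empty_of_lt hvu, continuous_const]
  have : (fun a => ∫ x in Icc u v, f (x - a)) =
      fun a => (∫ x in (0 : ℝ)..v - a, f x) - ∫ x in (0 : ℝ)..u - a, f x := by
    ext a
    rw [integral_Icc_eq_integral_Ioc, ← intervalIntegral.integral_of_le huv,
      intervalIntegral.integral_comp_sub_right,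
      intervalIntegral.integral_interval_sub_left (hf _ _) (hf _ _)]
  rw [this]
  exact ((intervalIntegral.continuous_primitive hf 0).comp (continuous_const.sub continuous_id)).sub
    ((intervalIntegral.continuous_primitive hf 0).comp (continuous_const.sub continuous_id))

theorem integrableOn_Icc_comp_sub {f : ℝ → ℝ} (hf : ∀ a b, IntervalIntegrable f volume a b)
    (a u v : ℝ) : IntegrableOn (fun x => f (x - a)) (Icc u v) := by
  have := (hf (u - a) (v - a)).comp_sub_right a
  simp only [sub_add_cancel] at this
  exact ((intervalIntegrable_iff').mp this).mono_set Icc_subset_uIcc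

theorem integrableOn_Icc_abs_sub_rpow {p : ℝ} (hp : -1 < p) (a u v : ℝ) :
    IntegrableOn (fun x => |a - x| ^ p) (Icc u v) := by
  simpa only [abs_sub_comm a] using integrableOn_Icc_comp_sub (intervalIntegrable_abs_rpow hp) a u v

theorem continuous_integral_Icc_abs_sub_rpow {p : ℝ} (hp : -1 < p) (u v : ℝ) :
    Continuous fun a => ∫ x in Icc u v, |a - x| ^ p := by
  simpa only [abs_sub_comm _ (_ : ℝ)] using
    continuous_integral_Icc_comp_sub (intervalIntegrable_abs_rpow hp) u v

section

variable {ι : Type*} [Fintype ι] {β : ι → ℝ} {B q : ℝ}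

theorem tendsto_sum_div_mul_apply_nhds_zero (hβ : ∑ k, β k = B) (hB : B ≠ 0) {Φ : ℝ → ℝ}
    (hΦ : ContinuousAt Φ 0) :
    Tendsto (fun c : ι → ℝ => ∑ k, β k / B * Φ (c k)) (𝓝 0) (𝓝 (Φ 0)) := by
  have hlim : Tendsto (fun c : ι → ℝ => ∑ k, β k / B * Φ (c k)) (𝓝 0)
      (𝓝 (∑ k, β k / B * Φ 0)) :=
    tendsto_finsetSum _ fun k _ => (hΦ.tendsto.comp ((continuous_apply k).tendsto 0)).const_mul _
  rwa [← Finset.sum_mul, ← Finset.sum_div, hβ, div_self hB, one_mul] at hlim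

theorem tendsto_prod_abs_sub_rpow (hβ : ∑ k, β k = B) {d : ℝ} (hd : d ≠ 0) :
    Tendsto (fun c : ι → ℝ => ∏ k, |d - c k| ^ (q * β k)) (𝓝 0) (𝓝 (|d| ^ (q * B))) := by
  have hlim : Tendsto (fun c : ι → ℝ => ∏ k, |d - c k| ^ (q * β k)) (𝓝 0)
      (𝓝 (∏ k, |d - (0 : ι → ℝ) k| ^ (q * β k))) :=
    tendsto_finsetProd _ fun k _ =>
      (((continuous_const.sub (continuous_apply k)).abs.tendsto 0).rpow_const
        (Or.inl (by simpa using hd)))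
  simp only [Pi.zero_apply, sub_zero] at hlim
  rwa [← Real.rpow_sum_of_pos (abs_pos.2 hd), ← Finset.mul_sum, hβ] at hlim

theorem prod_abs_sub_rpow_le (hβ0 : ∀ k, 0 ≤ β k) (hβ : ∑ k, β k = B) (hB : 0 < B)
    (a x : ℝ) (c : ι → ℝ) :
    ∏ k, |a - x - c k| ^ (q * β k) ≤ ∑ k, β k / B * |a - c k - x| ^ (q * B) :=
  calc ∏ k, |a - x - c k| ^ (q * β k) ≤ ∑ k, β k / B * |a - x - c k| ^ (q * B) :=
        Real.prod_rpow_mul_le_sum_mul_rpow _ (fun k _ => hβ0 k) (fun k _ => abs_nonneg _) hβ hB q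
    _ = ∑ k, β k / B * |a - c k - x| ^ (q * B) := by simp only [sub_right_comm a x]

theorem integral_Icc_sum_mul_abs_sub_rpow {p : ℝ} (hp : -1 < p) (w c : ι → ℝ) (a u v : ℝ) :
    ∫ x in Icc u v, ∑ k, w k * |a - c k - x| ^ p =
      ∑ k, w k * ∫ x in Icc u v, |a - c k - x| ^ p := by
  rw [integral_finsetSum _ fun k _ => (integrableOn_Icc_abs_sub_rpow hp _ u v).const_mul _]
  simp_rw [integral_const_mul]

theorem tendsto_integral_Icc_prod_abs_sub_rpow (hβ0 : ∀ k, 0 ≤ β k) (hβ : ∑ k, β k = B)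
    (hB : 0 < B) (hp : -1 < q * B) (a u v : ℝ) :
    Tendsto (fun c : ι → ℝ => ∫ x in Icc u v, ∏ k, |a - x - c k| ^ (q * β k)) (𝓝 0)
      (𝓝 (∫ x in Icc u v, |a - x| ^ (q * B))) := by
  have hint := integrableOn_Icc_abs_sub_rpow hp
  refine tendsto_integral_of_tendsto_of_le_of_tendsto_integral (l := 𝓝 (0 : ι → ℝ))
    (G := fun c x => ∑ k, β k / B * |a - c k - x| ^ (q * B)) (fun c => ?_)
    (fun c x => Finset.prod_nonneg fun k _ => Real.rpow_nonneg (abs_nonneg _) _)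
    (fun c => Eventually.of_forall fun x => ?_)
    (fun c => integrable_finsetSum _ fun k _ => (hint _ u v).const_mul _) (hint a u v)
    ((Measure.ae_ne _ a).mono fun x hx => tendsto_prod_abs_sub_rpow hβ (sub_ne_zero.2 hx.symm)) ?_
  · exact (by fun_prop : Measurable _).aestronglyMeasurable
  · exact prod_abs_sub_rpow_le hβ0 hβ hB a x c
  · have hlim := tendsto_sum_div_mul_apply_nhds_zero hβ hB.ne'
      ((continuous_integral_Icc_abs_sub_rpow hp u v).comp (continuous_sub_left a)).continuousAt
    simp only [Function.comp_apply, sub_zero] at hlim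
    exact hlim.congr fun c => (integral_Icc_sum_mul_abs_sub_rpow hp _ c a u v).symm

theorem tendsto_integral_Icc_integral_Icc_prod_abs_sub_rpow (hβ0 : ∀ k, 0 ≤ β k)
    (hβ : ∑ k, β k = B) (hB : 0 < B) (hp : -1 < q * B) (a b u v : ℝ) :
    Tendsto (fun c : ι → ℝ =>
        ∫ s in Icc a b, ∫ s' in Icc u v, ∏ k, |s - s' - c k| ^ (q * β k)) (𝓝 0)
      (𝓝 (∫ s in Icc a b, ∫ s' in Icc u v, |s - s'| ^ (q * B))) := by
  set ψ : ℝ → ℝ := fun y => ∫ s' in Icc u v, |y - s'| ^ (q * B)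
  have hψ : Continuous ψ := continuous_integral_Icc_abs_sub_rpow hp u v
  refine tendsto_integral_of_tendsto_of_le_of_tendsto_integral (l := 𝓝 (0 : ι → ℝ))
    (G := fun c s => ∑ k, β k / B * ψ (s - c k)) (fun c => ?_)
    (fun c s => integral_nonneg fun s' => Finset.prod_nonneg fun k _ =>
      Real.rpow_nonneg (abs_nonneg _) _)
    (fun c => Eventually.of_forall fun s => ?_)
    (fun c => (by fun_prop : Continuous fun s => ∑ k, β k / B * ψ (s - c k)).integrableOn_Icc)
    hψ.integrableOn_Icc
    (Eventually.of_forall fun s => tendsto_integral_Icc_prod_abs_sub_rpow hβ0 hβ hB hp s u v) ?_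
  · have hmeas : Measurable fun z : ℝ × ℝ => ∏ k, |z.1 - z.2 - c k| ^ (q * β k) := by fun_prop
    exact hmeas.stronglyMeasurable.integral_prod_right'.aestronglyMeasurable
  · calc ∫ s' in Icc u v, ∏ k, |s - s' - c k| ^ (q * β k)
        ≤ ∫ s' in Icc u v, ∑ k, β k / B * |s - c k - s'| ^ (q * B) :=
          integral_mono_of_nonneg (Eventually.of_forall fun s' => Finset.prod_nonneg fun k _ =>
              Real.rpow_nonneg (abs_nonneg _) _)
            (integrable_finsetSum _ fun k _ => (integrableOn_Icc_abs_sub_rpow hp _ u v).const_mul _)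
            (Eventually.of_forall fun s' => prod_abs_sub_rpow_le hβ0 hβ hB s s' c)
      _ = ∑ k, β k / B * ψ (s - c k) := integral_Icc_sum_mul_abs_sub_rpow hp _ c s u v
  · have hlim := tendsto_sum_div_mul_apply_nhds_zero hβ hB.ne'
      (continuous_integral_Icc_comp_sub hψ.intervalIntegrable a b).continuousAt
    simp only [sub_zero] at hlim
    refine hlim.congr fun c => ?_
    rw [integral_finsetSum _ fun k _ =>
      ((by fun_prop : Continuous fun s => ψ (s - c k)).integrableOn_Icc).const_mul _]
    simp_rw [integral_const_mul]

end

theorem stmt_8_general (n : ℕ) (H0 t : ℝ)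
    (m : ℕ) (hm : 1 ≤ m) (β : Fin n → ℕ) (hβ : ∑ k, β k = m)
    (hint : (2*H0 - 2) * (m:ℝ) > -1) (w : Fin n → ℝ) :
    Filter.Tendsto
      (fun T : ℝ => ∫ s in Set.Icc (0:ℝ) t, ∫ s' in Set.Icc (0:ℝ) t,
          ∏ k, |s - s' - w k / T| ^ ((2*H0 - 2) * (β k : ℝ)))
      Filter.atTop
      (nhds (∫ s in Set.Icc (0:ℝ) t, ∫ s' in Set.Icc (0:ℝ) t,
          |s - s'| ^ ((2*H0 - 2) * (m:ℝ)))) := by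
  have hshift : Tendsto (fun T : ℝ => fun k => w k / T) atTop (𝓝 0) :=
    tendsto_pi_nhds.2 fun k => tendsto_const_nhds.div_atTop tendsto_id
  exact (tendsto_integral_Icc_integral_Icc_prod_abs_sub_rpow (β := fun k => (β k : ℝ))
    (fun k => Nat.cast_nonneg _) (by exact_mod_cast hβ) (by exact_mod_cast hm) hint
    0 t 0 t).comp hshift

theorem stmt_8 (n : ℕ) (hn : 1 ≤ n) (H0 t : ℝ) (h1 : 1/2 < H0) (h2 : H0 < 1) (ht : 0 < t)
    (m : ℕ) (hm : 1 ≤ m) (β : Fin n → ℕ) (hβ : ∑ k, β k = m)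
    (hint : (2*H0 - 2) * (m:ℝ) > -1) (w : Fin n → ℝ) :
    Filter.Tendsto
      (fun T : ℝ => ∫ s in Set.Icc (0:ℝ) t, ∫ s' in Set.Icc (0:ℝ) t,
          ∏ k, |s - s' - w k / T| ^ ((2*H0 - 2) * (β k : ℝ)))
      Filter.atTop
      (nhds (∫ s in Set.Icc (0:ℝ) t, ∫ s' in Set.Icc (0:ℝ) t,
          |s - s'| ^ ((2*H0 - 2) * (m:ℝ)))) :=
  stmt_8_general n H0 t m hm β hβ hint w
end

section
/- Let H_0 ∈ (1/2,1), n ≥ 1, and nonnegative integers β_1,…,β_n with m = Σ_k β_k satisfying (2H_0-2)m > -1. Then sup over (w₁,…,wₙ) ∈ ℝⁿ of ∫_{[0,t]²} Π_{k=1}^n |s - s' - w_k|^{(2H_0-2)β_k} ds ds' is finite, for any fixed t > 0. -/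
/-!
With `α = 2H₀ - 2 < 0` and `γ = α m ∈ (-1, 0]`, bounding every factor by the largest one gives
`∏ₖ |xₖ| ^ (α βₖ) ≤ ∑ₖ |xₖ| ^ γ`, so it suffices to bound `∫_{[0,t]} |c - x| ^ γ dx` uniformly
in `c`. This follows from `|y| ^ γ ≤ 1_{[-1,1]}(y) |y| ^ γ + 1`: the first term is integrable
on `ℝ` because `γ > -1`, and its integral is invariant under `y ↦ c - y`.
-/

open MeasureTheory Set

lemma Finset.prod_pow_le_sum_pow_sum {ι R : Type*} [CommSemiring R] [LinearOrder R]
    [IsOrderedRing R] {s : Finset ι} (hs : s.Nonempty) {a : ι → R} (ha : ∀ i ∈ s, 0 ≤ a i)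
    (β : ι → ℕ) : ∏ i ∈ s, a i ^ β i ≤ ∑ i ∈ s, a i ^ ∑ j ∈ s, β j := by
  obtain ⟨j, hj, hmax⟩ := s.exists_max_image a hs
  calc ∏ i ∈ s, a i ^ β i
      ≤ ∏ i ∈ s, a j ^ β i := Finset.prod_le_prod (fun i hi => pow_nonneg (ha i hi) _)
        fun i hi => pow_le_pow_left₀ (ha i hi) (hmax i hi) _
    _ = a j ^ ∑ i ∈ s, β i := Finset.prod_pow_eq_pow_sum s β (a j)
    _ ≤ ∑ i ∈ s, a i ^ ∑ j ∈ s, β j :=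
        Finset.single_le_sum (f := fun i => a i ^ ∑ j ∈ s, β j)
          (fun i hi => pow_nonneg (ha i hi) _) hj

lemma Finset.prod_abs_rpow_mul_le_sum {ι : Type*} {s : Finset ι} (hs : s.Nonempty)
    (x : ι → ℝ) (α : ℝ) (β : ι → ℕ) :
    ∏ i ∈ s, |x i| ^ (α * β i) ≤ ∑ i ∈ s, |x i| ^ (α * ((∑ j ∈ s, β j : ℕ) : ℝ)) := by
  simp only [Real.rpow_mul_natCast (abs_nonneg _)]
  exact Finset.prod_pow_le_sum_pow_sum hs (fun i _ => Real.rpow_nonneg (abs_nonneg _) _) β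

lemma locallyIntegrable_abs_rpow {γ : ℝ} (hγ : -1 < γ) :
    LocallyIntegrable (fun x : ℝ => |x| ^ γ) := by
  refine locallyIntegrable_of_norm_le_rpow (C := 1) (α := -γ) (by simp) (by simp; linarith)
    (Filter.Eventually.of_forall fun x => ?_)
    (by fun_prop : Measurable fun x : ℝ => |x| ^ γ).aestronglyMeasurable
  simp [abs_of_nonneg (Real.rpow_nonneg (abs_nonneg x) γ)]

lemma integrable_indicator_abs_rpow {γ : ℝ} (hγ : -1 < γ) :
    Integrable ((Icc (-1 : ℝ) 1).indicator fun x => |x| ^ γ) :=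
  ((locallyIntegrable_abs_rpow hγ).integrableOn_isCompact isCompact_Icc).integrable_indicator
    measurableSet_Icc

lemma abs_rpow_le_indicator_add_one {γ : ℝ} (hγ : γ ≤ 0) (y : ℝ) :
    |y| ^ γ ≤ (Icc (-1 : ℝ) 1).indicator (fun x => |x| ^ γ) y + 1 := by
  by_cases hy : y ∈ Icc (-1 : ℝ) 1
  · simp [indicator_of_mem hy]
  · have hy₁ : 1 ≤ |y| := by
      rw [mem_Icc, ← abs_le, not_le] at hy
      exact hy.le
    simpa [indicator_of_notMem hy] using Real.rpow_le_one_of_one_le_of_nonpos hy₁ hγ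

section AbsSubRpow

variable {γ : ℝ} (hγ₁ : -1 < γ) (hγ₀ : γ ≤ 0) {s : Set ℝ} (hs : volume s ≠ ⊤) (c : ℝ)
include hγ₁ hγ₀ hs

lemma integrableOn_abs_sub_rpow : IntegrableOn (fun x => |c - x| ^ γ) s := by
  refine Integrable.mono' (((integrable_indicator_abs_rpow hγ₁).comp_sub_left c).integrableOn.add
    (integrableOn_const (C := (1 : ℝ)) hs))
    (by fun_prop : Measurable fun x => |c - x| ^ γ).aestronglyMeasurable
    (Filter.Eventually.of_forall fun x => ?_)
  rw [Real.norm_of_nonneg (Real.rpow_nonneg (abs_nonneg _) _)]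
  exact abs_rpow_le_indicator_add_one hγ₀ (c - x)

lemma setIntegral_abs_sub_rpow_le :
    ∫ x in s, |c - x| ^ γ ≤
      (∫ y, (Icc (-1 : ℝ) 1).indicator (fun x => |x| ^ γ) y) + volume.real s := by
  have hg := integrable_indicator_abs_rpow hγ₁
  calc ∫ x in s, |c - x| ^ γ
      ≤ ∫ x in s, ((Icc (-1 : ℝ) 1).indicator (fun x => |x| ^ γ) (c - x) + 1) :=
        integral_mono (integrableOn_abs_sub_rpow hγ₁ hγ₀ hs c)
          ((hg.comp_sub_left c).integrableOn.add (integrableOn_const (C := (1 : ℝ)) hs))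
          fun x => abs_rpow_le_indicator_add_one hγ₀ (c - x)
    _ = (∫ x in s, (Icc (-1 : ℝ) 1).indicator (fun x => |x| ^ γ) (c - x)) + volume.real s := by
        rw [integral_add (hg.comp_sub_left c).integrableOn (integrableOn_const (C := (1 : ℝ)) hs)]
        simp
    _ ≤ _ := by
        gcongr
        calc _ ≤ ∫ x, (Icc (-1 : ℝ) 1).indicator (fun x => |x| ^ γ) (c - x) :=
              setIntegral_le_integral (hg.comp_sub_left c) (Filter.Eventually.of_forall
                fun x => indicator_nonneg (fun y _ => Real.rpow_nonneg (abs_nonneg y) γ) _)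
          _ = _ := integral_sub_left_eq_self _ volume c

end AbsSubRpow

lemma setIntegral_prod_abs_sub_rpow_le {ι : Type*} [Fintype ι] [Nonempty ι] {α : ℝ}
    {β : ι → ℕ} (hγ₁ : -1 < α * ((∑ k, β k : ℕ) : ℝ)) (hγ₀ : α * ((∑ k, β k : ℕ) : ℝ) ≤ 0)
    {s : Set ℝ} (hs : volume s ≠ ⊤) (c : ι → ℝ) :
    ∫ x in s, ∏ k, |c k - x| ^ (α * β k) ≤ Fintype.card ι *
      ((∫ y, (Icc (-1 : ℝ) 1).indicator (fun x => |x| ^ (α * ((∑ k, β k : ℕ) : ℝ))) y) +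
        volume.real s) := by
  have hintegrable k := integrableOn_abs_sub_rpow hγ₁ hγ₀ hs (c k)
  calc ∫ x in s, ∏ k, |c k - x| ^ (α * β k)
      ≤ ∫ x in s, ∑ k, |c k - x| ^ (α * ((∑ k, β k : ℕ) : ℝ)) :=
        integral_mono_of_nonneg
          (Filter.Eventually.of_forall fun x =>
            Finset.prod_nonneg fun k _ => Real.rpow_nonneg (abs_nonneg _) _)
          (integrable_finsetSum _ fun k _ => hintegrable k)
          (Filter.Eventually.of_forall fun x =>
            Finset.prod_abs_rpow_mul_le_sum Finset.univ_nonempty (fun k => c k - x) α β)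
    _ = ∑ k, ∫ x in s, |c k - x| ^ (α * ((∑ k, β k : ℕ) : ℝ)) :=
        integral_finsetSum _ fun k _ => hintegrable k
    _ ≤ _ := by
        rw [← nsmul_eq_mul, ← Finset.card_univ, ← Finset.sum_const]
        exact Finset.sum_le_sum fun k _ => setIntegral_abs_sub_rpow_le hγ₁ hγ₀ hs (c k)

theorem stmt_9_general (n : ℕ) (hn : 1 ≤ n) (H0 t : ℝ) (h2 : H0 < 1)
    (β : Fin n → ℕ) (hint : (2*H0 - 2) * ((∑ k, β k : ℕ) : ℝ) > -1) :
    ∃ C : ℝ, ∀ w : Fin n → ℝ,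
      (∫ s in Set.Icc (0:ℝ) t, ∫ s' in Set.Icc (0:ℝ) t,
          ∏ k, |s - s' - w k| ^ ((2*H0 - 2) * (β k : ℝ))) ≤ C := by
  have : Nonempty (Fin n) := ⟨⟨0, hn⟩⟩
  have hγ₀ : (2*H0 - 2) * ((∑ k, β k : ℕ) : ℝ) ≤ 0 :=
    mul_nonpos_of_nonpos_of_nonneg (by linarith) (Nat.cast_nonneg _)
  obtain ⟨K, hK⟩ : ∃ K, ∀ (w : Fin n → ℝ) (s : ℝ),
      ∫ s' in Icc (0:ℝ) t, ∏ k, |s - s' - w k| ^ ((2*H0 - 2) * (β k : ℝ)) ≤ K :=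
    ⟨_, fun w s => by
      simpa only [sub_right_comm s _ (w _)] using setIntegral_prod_abs_sub_rpow_le
        (s := Icc 0 t) hint hγ₀ measure_Icc_lt_top.ne (fun k => s - w k)⟩
  refine ⟨K * volume.real (Icc (0 : ℝ) t), fun w => (Real.le_norm_self _).trans
    (norm_setIntegral_le_of_norm_le_const measure_Icc_lt_top fun s _ => ?_)⟩
  rw [Real.norm_of_nonneg (integral_nonneg fun s' =>
    Finset.prod_nonneg fun k _ => Real.rpow_nonneg (abs_nonneg _) _)]
  exact hK w s

theorem stmt_9 (n : ℕ) (hn : 1 ≤ n) (H0 t : ℝ) (h1 : 1/2 < H0) (h2 : H0 < 1) (ht : 0 < t)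
    (β : Fin n → ℕ) (hint : (2*H0 - 2) * ((∑ k, β k : ℕ) : ℝ) > -1) :
    ∃ C : ℝ, ∀ w : Fin n → ℝ,
      (∫ s in Set.Icc (0:ℝ) t, ∫ s' in Set.Icc (0:ℝ) t,
          ∏ k, |s - s' - w k| ^ ((2*H0 - 2) * (β k : ℝ))) ≤ C :=
  stmt_9_general n hn H0 t h2 β hint
end
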